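/- arXiv:2502.16883 — 3 statements merged into one kernel-verified Lean document; each statement's English description precedes it below -/
import Mathlib

section
/- The distribution ρ_n ∝ sin^p(π(n+1)/(D+1)) on n ∈ {0,...,D-1} is the stationary distribution of the birth-death chain with birth rate (G̃_{n+1})² from state n to n+1 and death rate (L̃_n)² from state n to n-1: that is, for all 0 < n < D-1, (G̃_n)² ρ_{n-1} + (L̃_{n+1})² ρ_{n+1} = [(G̃_{n+1})² + (L̃_n)²] ρ_n, together with the boundary balance conditions at n = 0 and n = D-1. -/
/-!
The chain satisfies detailed balance: writing `s n = sin (π n / (D + 1))`, both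
`G̃_n² ρ_{n-1}` and `L̃_n² ρ_n` equal `s (n+1) ^ (p λ) * s n ^ (p (1 - λ)) / Z`,
and detailed balance on a path implies global balance at every state.
-/

open Real

lemma sin_pi_mul_div_pos {x y : ℝ} (hx : 0 < x) (hxy : x < y) : 0 < sin (π * x / y) := by
  have hy : 0 < y := hx.trans hxy
  apply sin_pos_of_pos_of_lt_pi (by positivity)
  rw [mul_div_assoc]
  exact mul_lt_of_lt_one_right pi_pos ((div_lt_one hy).2 hxy)

lemma div_rpow_sq_mul_rpow_eq {a b : ℝ} (ha : 0 < a) (hb : 0 < b) (p lam : ℝ) :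
    ((b / a) ^ (p * lam / 2)) ^ 2 * a ^ p = ((a / b) ^ (p * (1 - lam) / 2)) ^ 2 * b ^ p := by
  have sq_rpow_half : ∀ {x : ℝ}, 0 ≤ x → ∀ r : ℝ, (x ^ (r / 2)) ^ 2 = x ^ r := fun hx r => by
    rw [← rpow_natCast, ← rpow_mul hx]; norm_num
  rw [sq_rpow_half (div_pos hb ha).le, sq_rpow_half (div_pos ha hb).le,
    div_rpow hb.le ha.le, div_rpow ha.le hb.le]
  have hp_split : a ^ p = a ^ (p * lam) * a ^ (p * (1 - lam)) := by
    rw [← rpow_add ha]; ring_nf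
  have hp_split' : b ^ p = b ^ (p * lam) * b ^ (p * (1 - lam)) := by
    rw [← rpow_add hb]; ring_nf
  have := rpow_pos_of_pos ha (p * lam)
  have := rpow_pos_of_pos hb (p * (1 - lam))
  rw [hp_split, hp_split']
  field_simp

lemma balance_of_detailed_balance {D : ℕ} (hD : 2 ≤ D) {birth death ρ : ℕ → ℝ}
    (h : ∀ n, 1 ≤ n → n ≤ D - 1 → birth n * ρ (n - 1) = death n * ρ n) :
    (∀ n, 0 < n → n < D - 1 →
      birth n * ρ (n - 1) + death (n + 1) * ρ (n + 1) = (birth (n + 1) + death n) * ρ n) ∧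
    death 1 * ρ 1 = birth 1 * ρ 0 ∧
    birth (D - 1) * ρ (D - 2) = death (D - 1) * ρ (D - 1) := by
  refine ⟨fun n hn0 hn => ?_, (h 1 le_rfl (by omega)).symm, ?_⟩
  · have h_up := h (n + 1) (by omega) (by omega)
    rw [Nat.add_sub_cancel] at h_up
    rw [h n hn0 (by omega), ← h_up]
    ring
  · simpa only [show D - 1 - 1 = D - 2 by omega] using h (D - 1) (by omega) le_rfl

theorem stmt_1_general (D : ℕ) (hD : 2 ≤ D) (p lam : ℝ)
    (G L ρ : ℕ → ℝ)
    (hG : ∀ n, 1 ≤ n → n ≤ D - 1 →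
      G n = (Real.sin (π * (n + 1) / (D + 1)) / Real.sin (π * n / (D + 1))) ^ (p * lam / 2))
    (hL : ∀ n, 1 ≤ n → n ≤ D - 1 →
      L n = (Real.sin (π * n / (D + 1)) / Real.sin (π * (n + 1) / (D + 1))) ^ (p * (1 - lam) / 2))
    (hρ : ∀ n, n < D →
      ρ n = Real.sin (π * (n + 1) / (D + 1)) ^ p /
        ∑ m ∈ Finset.range D, Real.sin (π * (m + 1) / (D + 1)) ^ p) :
    (∀ n, 0 < n → n < D - 1 →
      (G n) ^ 2 * ρ (n - 1) + (L (n + 1)) ^ 2 * ρ (n + 1) =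
        ((G (n + 1)) ^ 2 + (L n) ^ 2) * ρ n) ∧
    (L 1) ^ 2 * ρ 1 = (G 1) ^ 2 * ρ 0 ∧
    (G (D - 1)) ^ 2 * ρ (D - 2) = (L (D - 1)) ^ 2 * ρ (D - 1) := by
  apply balance_of_detailed_balance (birth := fun n => G n ^ 2) (death := fun n => L n ^ 2) hD
  intro n h1 h2
  have hD1 : ((D : ℝ) + 1) = ((D + 1 : ℕ) : ℝ) := by push_cast; ring
  have hsin_n : 0 < sin (π * n / (D + 1)) :=
    sin_pi_mul_div_pos (by exact_mod_cast h1) (by rw [hD1]; exact_mod_cast (by omega : n < D + 1))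
  have hsin_succ : 0 < sin (π * (n + 1) / (D + 1)) :=
    sin_pi_mul_div_pos (by positivity) (by rw [hD1]; exact_mod_cast (by omega : n + 1 < D + 1))
  have hcast : ((n - 1 : ℕ) : ℝ) + 1 = n := by rw [Nat.cast_sub h1]; ring
  rw [hρ _ (by omega), hρ _ (by omega), hG n h1 h2, hL n h1 h2, hcast, ← mul_div_assoc,
    ← mul_div_assoc, div_rpow_sq_mul_rpow_eq hsin_n hsin_succ]

/-- The distribution `ρ_n ∝ sin^p (π(n+1)/(D+1))` is stationary for the birth-death
chain with birth rates `(G̃_{n+1})²` and death rates `(L̃_n)²`: full balance in the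
bulk together with the boundary balance conditions at `n = 0` and `n = D-1`. -/
theorem stmt_1 (D : ℕ) (hD : 2 ≤ D) (p lam : ℝ) (hp : 0 < p)
    (G L ρ : ℕ → ℝ)
    (hG : ∀ n, 1 ≤ n → n ≤ D - 1 →
      G n = (Real.sin (π * (n + 1) / (D + 1)) / Real.sin (π * n / (D + 1))) ^ (p * lam / 2))
    (hGD : G D = 0)
    (hL : ∀ n, 1 ≤ n → n ≤ D - 1 →
      L n = (Real.sin (π * n / (D + 1)) / Real.sin (π * (n + 1) / (D + 1))) ^ (p * (1 - lam) / 2))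
    (hL0 : L 0 = 0)
    (hρ : ∀ n, n < D →
      ρ n = Real.sin (π * (n + 1) / (D + 1)) ^ p /
        ∑ m ∈ Finset.range D, Real.sin (π * (m + 1) / (D + 1)) ^ p) :
    (∀ n, 0 < n → n < D - 1 →
      (G n) ^ 2 * ρ (n - 1) + (L (n + 1)) ^ 2 * ρ (n + 1) =
        ((G (n + 1)) ^ 2 + (L n) ^ 2) * ρ n) ∧
    (L 1) ^ 2 * ρ 1 = (G 1) ^ 2 * ρ 0 ∧
    (G (D - 1)) ^ 2 * ρ (D - 2) = (L (D - 1)) ^ 2 * ρ (D - 1) :=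
  stmt_1_general D hD p lam G L ρ hG hL hρ
end

section
/- For the state ϱ^φ = Σ_{m,n} √(ρ_m ρ_n) e^{iφ(m-n)}|m⟩⟨n| with ρ supported on {0,...,D-1}, and the lowering operator L̂ = Σ_{l=1}^{D-1} √(ρ_{l-1}/ρ_l)|l-1⟩⟨l|, one has the exact identity L̂ ϱ^φ = e^{iφ}(ϱ^φ + ŝ) where ŝ = -Σ_{n=0}^{D-1} √(ρ_{D-1}ρ_n) e^{i(D-1-n)φ}|D-1⟩⟨n|, and the Hilbert-Schmidt norm satisfies ‖ŝ‖ = √ρ_{D-1}. -/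
open Complex Matrix

/-!
Write `ϱ^φ = |ψ⟩⟨ψ|` with `ψ_n = √ρ_n e^{iφn}`. The lowering operator shifts `ψ` down by one
place, and its weights `√(ρ_{l-1}/ρ_l)` turn `√ρ_l e^{iφl}` into `e^{iφ} √ρ_{l-1} e^{iφ(l-1)}`;
so `L̂ψ = e^{iφ}(ψ - ψ_{D-1}|D-1⟩)`, the defect coming from the top component, which has nothing
above it. Hence `L̂ϱ^φ = (L̂ψ)ψ† = e^{iφ}(ϱ^φ + ŝ)` with the rank-one `ŝ = -ψ_{D-1}|D-1⟩ψ†`,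
whose Hilbert–Schmidt norm is `|ψ_{D-1}| ‖ψ‖ = √ρ_{D-1}`.
-/

theorem sum_sum_norm_vecMulVec_sq {m n α : Type*} [Fintype m] [Fintype n] [NormedRing α]
    [NormMulClass α] (u : m → α) (v : n → α) :
    ∑ i, ∑ j, ‖vecMulVec u v i j‖ ^ 2 = (∑ i, ‖u i‖ ^ 2) * ∑ j, ‖v j‖ ^ 2 := by
  simp only [vecMulVec_apply, norm_mul, mul_pow, Finset.sum_mul_sum]

section

variable {D : ℕ}

noncomputable def phaseVector (ρ : Fin D → ℝ) (φ : ℝ) : Fin D → ℂ :=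
  fun n => √(ρ n) * exp ((φ * n : ℝ) * I)

noncomputable def weightedLowering (ρ : Fin D → ℝ) : Matrix (Fin D) (Fin D) ℂ :=
  of fun i j => if (i : ℕ) + 1 = j then ((√(ρ i / ρ j) : ℝ) : ℂ) else 0

variable {ρ : Fin D → ℝ} {φ : ℝ}

theorem phaseVector_mul_star_phaseVector {m n : Fin D} (hm : 0 ≤ ρ m) :
    phaseVector ρ φ m * star (phaseVector ρ φ n) =
      (√(ρ m * ρ n) : ℝ) * exp (I * φ * ((m : ℝ) - (n : ℝ))) := by
  have hconj : star (exp ((φ * n : ℝ) * I)) = exp (-((φ * n : ℝ) * I)) := by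
    rw [Complex.star_def, ← Complex.exp_conj]
    simp
  rw [phaseVector, phaseVector, star_mul', hconj, Real.sqrt_mul hm, Complex.star_def,
    Complex.conj_ofReal, Complex.ofReal_mul, mul_mul_mul_comm, ← Complex.exp_add]
  push_cast
  ring_nf

theorem norm_phaseVector_sq {n : Fin D} (hn : 0 ≤ ρ n) : ‖phaseVector ρ φ n‖ ^ 2 = ρ n := by
  rw [phaseVector, norm_mul, Complex.norm_exp_ofReal_mul_I, mul_one, Complex.norm_real,
    Real.norm_of_nonneg (Real.sqrt_nonneg _), Real.sq_sqrt hn]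

theorem weightedLowering_mulVec_apply_of_lt {i : Fin D} (hi : (i : ℕ) + 1 < D)
    (v : Fin D → ℂ) :
    (weightedLowering ρ *ᵥ v) i = √(ρ i / ρ ⟨i + 1, hi⟩) * v ⟨i + 1, hi⟩ := by
  rw [mulVec, dotProduct, Finset.sum_eq_single ⟨i + 1, hi⟩]
  · simp [weightedLowering]
  · intro j _ hj
    have : (i : ℕ) + 1 ≠ j := fun h => hj (Fin.ext h.symm)
    simp [weightedLowering, this]
  · simp

theorem weightedLowering_mulVec_apply_of_eq {i : Fin D} (hi : (i : ℕ) + 1 = D)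
    (v : Fin D → ℂ) : (weightedLowering ρ *ᵥ v) i = 0 := by
  rw [mulVec, dotProduct]
  refine Finset.sum_eq_zero fun j _ => ?_
  have : (i : ℕ) + 1 ≠ j := by omega
  simp [weightedLowering, this]

theorem weightedLowering_mulVec_phaseVector (hρ : ∀ n, 0 < ρ n) {last : Fin D}
    (hlast : (last : ℕ) + 1 = D) :
    weightedLowering ρ *ᵥ phaseVector ρ φ =
      exp (φ * I) • (phaseVector ρ φ - Pi.single last (phaseVector ρ φ last)) := by
  ext i
  rcases (show (i : ℕ) + 1 < D ∨ (i : ℕ) + 1 = D by omega) with hi | hi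
  · have hne : i ≠ last := Fin.ne_of_val_ne (by omega)
    rw [weightedLowering_mulVec_apply_of_lt hi, Pi.smul_apply, Pi.sub_apply,
      Pi.single_eq_of_ne hne, sub_zero, phaseVector, phaseVector, ← mul_assoc, ← ofReal_mul,
      Real.sqrt_div' _ (hρ _).le, div_mul_cancel₀ _ (Real.sqrt_pos.2 (hρ _)).ne', smul_eq_mul,
      mul_left_comm, ← Complex.exp_add]
    push_cast
    ring_nf
  · obtain rfl : i = last := Fin.ext (by omega)
    rw [weightedLowering_mulVec_apply_of_eq hi, Pi.smul_apply, Pi.sub_apply,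
      Pi.single_eq_same, sub_self, smul_zero]

end

/-- The pure phase state `ϱ^φ = Σ √(ρ_m ρ_n) e^{iφ(m-n)}|m⟩⟨n|` is an approximate
eigenstate of the weighted lowering operator `L̂ = Σ √(ρ_{l-1}/ρ_l)|l-1⟩⟨l|`:
`L̂ ϱ^φ = e^{iφ}(ϱ^φ + ŝ)` exactly, where `ŝ` is supported on the top row
`m = D-1` with `ŝ_{D-1,n} = -√(ρ_{D-1}ρ_n) e^{iφ(D-1-n)}`, and the
Hilbert–Schmidt norm of `ŝ` equals `√ρ_{D-1}`. -/
theorem stmt_17 (D : ℕ) (hD : 0 < D) (ρ : Fin D → ℝ)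
    (hρpos : ∀ n, 0 < ρ n) (hρsum : ∑ n, ρ n = 1) (φ : ℝ)
    (ϱ L s : Matrix (Fin D) (Fin D) ℂ)
    (hϱ : ∀ m n, ϱ m n = (Real.sqrt (ρ m * ρ n) : ℝ) *
      Complex.exp (Complex.I * φ * ((m : ℝ) - (n : ℝ))))
    (hL : ∀ i j, L i j =
      if (i : ℕ) + 1 = (j : ℕ) then ((Real.sqrt (ρ i / ρ j) : ℝ) : ℂ) else 0)
    (hs : ∀ m n, s m n =
      if (m : ℕ) = D - 1 then
        -((Real.sqrt (ρ m * ρ n) : ℝ) *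
          Complex.exp (Complex.I * φ * ((m : ℝ) - (n : ℝ))))
      else 0) :
    L * ϱ = Complex.exp (Complex.I * φ) • (ϱ + s) ∧
    Real.sqrt (∑ m, ∑ n, ‖s m n‖ ^ 2) =
      Real.sqrt (ρ ⟨D - 1, by omega⟩) := by
  set last : Fin D := ⟨D - 1, by omega⟩
  have hlast : (last : ℕ) + 1 = D := Nat.sub_add_cancel hD
  have hL' : L = weightedLowering ρ := ext hL
  have hϱ' : ϱ = vecMulVec (phaseVector ρ φ) (star (phaseVector ρ φ)) := ext fun m n => by
    rw [hϱ, vecMulVec_apply, Pi.star_apply, phaseVector_mul_star_phaseVector (hρpos m).le]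
  have hs' : s = -vecMulVec (Pi.single last (phaseVector ρ φ last))
      (star (phaseVector ρ φ)) := ext fun m n => by
    rw [hs, neg_apply, vecMulVec_apply, Pi.single_apply, Pi.star_apply]
    by_cases hm : m = last
    · rw [if_pos (congrArg Fin.val hm), if_pos hm,
        ← phaseVector_mul_star_phaseVector (hρpos m).le, hm]
    · rw [if_neg (fun h => hm (Fin.ext h)), if_neg hm, zero_mul, neg_zero]
  refine ⟨?_, ?_⟩
  · rw [hL', hϱ', hs', mul_vecMulVec, weightedLowering_mulVec_phaseVector hρpos hlast,
      smul_vecMulVec, sub_vecMulVec, ← sub_eq_add_neg, mul_comm I]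
  · simp only [hs', Matrix.neg_apply, norm_neg, sum_sum_norm_vecMulVec_sq, Pi.star_apply,
      norm_star, norm_phaseVector_sq (hρpos _).le, hρsum, mul_one]
    rw [Fintype.sum_eq_single last fun i hi => by simp [hi], Pi.single_eq_same,
      norm_phaseVector_sq (hρpos _).le]
end

section
/- For ρ_n ∝ sin^p(π(n+1)/(D+1)) on {0,...,D-1}, the boundary weight satisfies ρ_{D-1} ~ π^{-1/2}·(π/(2μ))^{p+1}·Γ((2+p)/2)/Γ((1+p)/2) as μ = (D-1)/2 → ∞ with p fixed; in particular ρ_{D-1} = Θ(μ^{-(p+1)}). -/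
/-!
Write `ρ_{D-1} = sin^p(π/(D+1)) / S_D` with `S_D = ∑_{n<D} sin^p(π(n+1)/(D+1))`. The numerator is
`~ (π/(D+1))^p`, and `(π/(D+1)) S_D` is a right Riemann sum of `sin^p` on `[0, π]` (whose last
node `π` contributes nothing), so `S_D ~ (D+1)/π · ∫_0^π sin^p`. The substitution
`u = (1 - cos θ)/2` turns the integral into `2^p B(v, v)` with `v = (1+p)/2`, and Legendre's
duplication formula evaluates this to `√π Γ((1+p)/2) / Γ((2+p)/2)`. Since `D + 1 ~ D - 1 = 2μ`,
this gives the asymptotic equivalence, from which the two-sided bound is read off.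
-/

open Real Finset Filter MeasureTheory Set Topology Asymptotics

theorem integral_rpow_mul_one_sub_rpow {u v : ℝ} (hu : 0 < u) (hv : 0 < v) :
    ∫ x in (0 : ℝ)..1, x ^ (u - 1) * (1 - x) ^ (v - 1) = Gamma u * Gamma v / Gamma (u + v) := by
  have h := Complex.Gamma_mul_Gamma_eq_betaIntegral (s := u) (t := v)
    (by simpa using hu) (by simpa using hv)
  have hB : Complex.betaIntegral u v =
      ((∫ x in (0 : ℝ)..1, x ^ (u - 1) * (1 - x) ^ (v - 1) : ℝ) : ℂ) := by
    rw [Complex.betaIntegral, ← intervalIntegral.integral_ofReal]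
    refine intervalIntegral.integral_congr fun x hx => ?_
    rw [Set.uIcc_of_le zero_le_one] at hx
    push_cast
    rw [Complex.ofReal_cpow hx.1, Complex.ofReal_cpow (sub_nonneg.2 hx.2)]
    push_cast
    ring_nf
  rw [hB, ← Complex.ofReal_add, Complex.Gamma_ofReal, Complex.Gamma_ofReal,
    Complex.Gamma_ofReal] at h
  rw [eq_div_iff (Gamma_pos_of_pos (add_pos hu hv)).ne', mul_comm]
  exact_mod_cast h.symm

theorem Gamma_mul_Gamma_div_Gamma_two_mul {s : ℝ} (hs : 0 < s) :
    Gamma s * Gamma s / Gamma (2 * s) = 2 ^ (1 - 2 * s) * √π * Gamma s / Gamma (s + 1 / 2) := by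
  have hΓ := Gamma_mul_Gamma_add_half_of_pos hs
  have h₁ := Gamma_pos_of_pos (mul_pos two_pos hs)
  have h₂ := Gamma_pos_of_pos (show 0 < s + 1 / 2 by linarith)
  rw [div_eq_div_iff h₁.ne' h₂.ne']
  linear_combination Gamma s * hΓ

theorem integral_sin_rpow {p : ℝ} (hp : -1 < p) :
    ∫ θ in (0 : ℝ)..π, sin θ ^ p = √π * Gamma ((1 + p) / 2) / Gamma ((2 + p) / 2) := by
  set v := (1 + p) / 2
  have hv : 0 < v := by simp only [v]; linarith
  -- substitute `u = (1 - cos θ) / 2`, so that `u (1 - u) = (sin θ / 2) ^ 2`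
  have hsubst : ∫ θ in Icc 0 π, (sin θ / 2) * (((1 - cos θ) / 2) ^ (v - 1) *
      (1 - (1 - cos θ) / 2) ^ (v - 1)) = ∫ u in Icc 0 1, u ^ (v - 1) * (1 - u) ^ (v - 1) := by
    convert integral_Icc_deriv_smul_of_deriv_nonneg (f := fun θ => (1 - cos θ) / 2)
      (f' := fun θ => sin θ / 2) (g := fun u => u ^ (v - 1) * (1 - u) ^ (v - 1))
      (by fun_prop) (fun θ _ => ?_) (fun θ hθ => ?_) pi_pos.le using 3
    · simp
    · simp
    · simpa using ((hasDerivAt_cos θ).const_sub 1).div_const 2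
    · exact div_nonneg (sin_nonneg_of_nonneg_of_le_pi hθ.1.le hθ.2.le) zero_le_two
  have hpointwise : ∀ θ ∈ Ioo 0 π, (sin θ / 2) * (((1 - cos θ) / 2) ^ (v - 1) *
      (1 - (1 - cos θ) / 2) ^ (v - 1)) = sin θ ^ p / 2 ^ p := by
    intro θ hθ
    have hsin := sin_pos_of_pos_of_lt_pi hθ.1 hθ.2
    have hsq : (1 - cos θ) / 2 * (1 - (1 - cos θ) / 2) = (sin θ / 2) ^ (2 : ℝ) := by
      rw [rpow_two]; nlinarith [sin_sq_add_cos_sq θ]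
    rw [← mul_rpow (by nlinarith [cos_le_one θ]) (by nlinarith [neg_one_le_cos θ]), hsq,
      ← rpow_mul (by positivity), ← div_rpow hsin.le zero_le_two,
      show 2 * (v - 1) = p - 1 by ring, rpow_sub_one (by positivity)]
    field_simp
  rw [intervalIntegral.integral_of_le pi_pos.le, ← integral_Icc_eq_integral_Ioc,
    integral_Icc_eq_integral_Ioo]
  have h2p : (0 : ℝ) < 2 ^ p := by positivity
  calc ∫ θ in Ioo 0 π, sin θ ^ p = 2 ^ p * ∫ θ in Ioo 0 π, sin θ ^ p / 2 ^ p := by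
        rw [integral_div, mul_div_cancel₀ _ h2p.ne']
    _ = 2 ^ p * ∫ u in (0 : ℝ)..1, u ^ (v - 1) * (1 - u) ^ (v - 1) := by
        rw [← setIntegral_congr_fun measurableSet_Ioo hpointwise, ← integral_Icc_eq_integral_Ioo,
          hsubst, intervalIntegral.integral_of_le zero_le_one, integral_Icc_eq_integral_Ioc]
    _ = √π * Gamma v / Gamma ((2 + p) / 2) := by
        rw [integral_rpow_mul_one_sub_rpow hv hv, ← two_mul, Gamma_mul_Gamma_div_Gamma_two_mul hv,
          show 1 - 2 * v = -p by ring, show (2 + p) / 2 = v + 1 / 2 by ring, rpow_neg zero_le_two]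
        field_simp

theorem abs_mul_sub_integral_le {f : ℝ → ℝ} {x y c ε : ℝ} (hxy : x ≤ y)
    (hf : IntervalIntegrable f volume x y) (h : ∀ t ∈ Icc x y, |c - f t| ≤ ε) :
    |(y - x) * c - ∫ t in x..y, f t| ≤ ε * (y - x) := by
  rw [← smul_eq_mul, ← intervalIntegral.integral_const, ← intervalIntegral.integral_sub
    intervalIntegrable_const hf, ← abs_of_nonneg (sub_nonneg.2 hxy)]
  exact intervalIntegral.norm_integral_le_of_norm_le_const (f := fun t => c - f t) fun t ht =>
    h t (Ioc_subset_Icc_self (uIoc_of_le hxy ▸ ht))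

theorem abs_riemannSum_sub_integral_le {f : ℝ → ℝ} {a b ε : ℝ} {N : ℕ} (hN : 0 < N)
    (hab : a ≤ b) (hf : ContinuousOn f (Icc a b))
    (hosc : ∀ x ∈ Icc a b, ∀ y ∈ Icc a b, dist x y ≤ (b - a) / N → dist (f x) (f y) ≤ ε) :
    |(b - a) / N * ∑ k ∈ range N, f (a + (k + 1) * ((b - a) / N)) - ∫ x in a..b, f x| ≤
      ε * (b - a) := by
  have hNpos : (0 : ℝ) < N := Nat.cast_pos.2 hN
  set h := (b - a) / N
  have hh : 0 ≤ h := div_nonneg (sub_nonneg.2 hab) hNpos.le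
  set t : ℕ → ℝ := fun k => a + k * h
  have hstep : ∀ k, t (k + 1) - t k = h := fun k => by simp only [t]; push_cast; ring
  have hmono : ∀ k, t k ≤ t (k + 1) := fun k => by linarith [hstep k]
  have ht : ∀ k ≤ N, t k ∈ Icc a b := fun k hk => by
    have : (k : ℝ) * h ≤ N * h := by gcongr
    rw [mul_div_cancel₀ _ hNpos.ne'] at this
    exact ⟨le_add_of_nonneg_right (mul_nonneg k.cast_nonneg hh), by simp only [t]; linarith⟩
  have hint : ∀ k < N, IntervalIntegrable f volume (t k) (t (k + 1)) := fun k hk =>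
    (hf.mono (Icc_subset_Icc (ht k hk.le).1 (ht (k + 1) hk).2)).intervalIntegrable_of_Icc
      (hmono k)
  have hcell : ∀ k < N, |h * f (t (k + 1)) - ∫ x in t k..t (k + 1), f x| ≤ ε * h := by
    intro k hk
    have hleft := ht k hk.le
    have hright := ht (k + 1) hk
    rw [← hstep k]
    refine abs_mul_sub_integral_le (hmono k) (hint k hk) fun s hs => ?_
    rw [← Real.dist_eq]
    refine hosc _ hright _ ⟨hleft.1.trans hs.1, hs.2.trans hright.2⟩ ?_
    rw [Real.dist_eq, abs_of_nonneg (by linarith [hs.2])]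
    linarith [hs.1, hstep k]
  have hsplit : ∫ x in a..b, f x = ∑ k ∈ range N, ∫ x in t k..t (k + 1), f x := by
    rw [intervalIntegral.sum_integral_adjacent_intervals hint]
    simp [t, h, mul_div_cancel₀ _ hNpos.ne']
  have hnode : ∀ k : ℕ, a + (k + 1) * h = t (k + 1) := fun k => by simp only [t]; push_cast; ring
  simp only [hnode]
  rw [hsplit, Finset.mul_sum, ← Finset.sum_sub_distrib]
  calc |∑ k ∈ range N, (h * f (t (k + 1)) - ∫ x in t k..t (k + 1), f x)|
      ≤ ∑ k ∈ range N, |h * f (t (k + 1)) - ∫ x in t k..t (k + 1), f x| :=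
        abs_sum_le_sum_abs _ _
    _ ≤ ∑ _k ∈ range N, ε * h := Finset.sum_le_sum fun k hk => hcell k (Finset.mem_range.1 hk)
    _ = ε * (b - a) := by
        rw [Finset.sum_const, Finset.card_range, nsmul_eq_mul]
        simp only [h]
        field_simp

theorem tendsto_riemannSum_right {f : ℝ → ℝ} {a b : ℝ} (hab : a ≤ b)
    (hf : ContinuousOn f (Icc a b)) :
    Tendsto (fun N : ℕ => (b - a) / N * ∑ k ∈ range N, f (a + (k + 1) * ((b - a) / N)))
      atTop (𝓝 (∫ x in a..b, f x)) := by
  refine Metric.tendsto_nhds.2 fun ε hε => ?_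
  obtain ⟨δ, hδ, hfδ⟩ := Metric.uniformContinuousOn_iff_le.1
    (isCompact_Icc.uniformContinuousOn_of_continuous hf) (ε / (b - a + 1)) (by positivity)
  filter_upwards [eventually_gt_atTop 0,
    (tendsto_const_div_atTop_nhds_zero_nat (b - a)).eventually (ge_mem_nhds hδ)] with N hN hNδ
  rw [Real.dist_eq]
  refine (abs_riemannSum_sub_integral_le hN hab hf fun x hx y hy hxy =>
    hfδ x hx y hy (hxy.trans hNδ)).trans_lt ?_
  rw [div_mul_eq_mul_div, div_lt_iff₀ (by linarith)]
  nlinarith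

theorem tendsto_mul_sum_sin_rpow {p : ℝ} (hp : 0 < p) :
    Tendsto (fun D : ℕ => π / (D + 1) * ∑ n ∈ range D, sin (π * (n + 1) / (D + 1)) ^ p) atTop
      (𝓝 (√π * Gamma ((1 + p) / 2) / Gamma ((2 + p) / 2))) := by
  rw [← integral_sin_rpow (by linarith)]
  have hf : Continuous fun θ => sin θ ^ p := continuous_sin.rpow_const fun _ => Or.inr hp.le
  refine ((tendsto_riemannSum_right pi_pos.le hf.continuousOn).comp
    (tendsto_add_atTop_nat 1)).congr fun D => ?_
  simp only [Function.comp, Nat.cast_add_one, sub_zero, zero_add, Finset.sum_range_succ]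
  rw [show ((D : ℝ) + 1) * (π / (D + 1)) = π by field_simp, sin_pi, zero_rpow hp.ne', add_zero]
  congr 1
  refine Finset.sum_congr rfl fun n _ => ?_
  rw [mul_div_assoc', mul_comm]

theorem isEquivalent_natCast_add_one_sub_one :
    (fun D : ℕ => (D : ℝ) + 1) ~[atTop] fun D => (D : ℝ) - 1 := by
  have h : Tendsto (norm ∘ fun D : ℕ => (D : ℝ)) atTop atTop := by
    simpa [Function.comp_def] using tendsto_natCast_atTop_atTop
  simp only [sub_eq_add_neg]
  exact (IsEquivalent.refl.add_const_of_norm_tendsto_atTop h).trans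
    (IsEquivalent.refl.add_const_of_norm_tendsto_atTop h).symm

theorem isEquivalent_sin_rpow_div_sum_sin_rpow {p : ℝ} (hp : 0 < p) :
    (fun D : ℕ => sin (π * D / (D + 1)) ^ p / ∑ n ∈ range D, sin (π * (n + 1) / (D + 1)) ^ p)
      ~[atTop] fun D => π ^ (-(1 : ℝ) / 2) * (π / ((D : ℝ) - 1)) ^ (p + 1) *
        (Gamma ((2 + p) / 2) / Gamma ((1 + p) / 2)) := by
  set I := √π * Gamma ((1 + p) / 2) / Gamma ((2 + p) / 2)
  have hI : 0 < I := by
    have := Gamma_pos_of_pos (show 0 < (1 + p) / 2 by linarith)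
    have := Gamma_pos_of_pos (show 0 < (2 + p) / 2 by linarith)
    positivity
  set x : ℕ → ℝ := fun D => π / (D + 1)
  have hx0 : 0 ≤ x := fun D => by positivity
  have hx : Tendsto x atTop (𝓝 0) := by
    refine ((tendsto_const_div_atTop_nhds_zero_nat π).comp (tendsto_add_atTop_nat 1)).congr
      fun D => ?_
    simp [x]
  have hsin : (fun D : ℕ => sin (π * D / (D + 1))) ~[atTop] x := by
    refine (isEquivalent_sin.comp_tendsto hx).congr_left (Eventually.of_forall fun D => ?_)
    simp only [Function.comp_apply, x]
    rw [← sin_pi_sub]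
    congr 1
    field_simp
    ring
  have hsum : (fun D : ℕ => ∑ n ∈ range D, sin (π * (n + 1) / (D + 1)) ^ p) ~[atTop]
      fun D => I / x D := by
    have h := (tendsto_mul_sum_sin_rpow hp).div_const I
    rw [div_self hI.ne'] at h
    refine isEquivalent_of_tendsto_one (h.congr fun D => ?_)
    simp only [Pi.div_apply, x]
    field_simp
  have hx' : x ~[atTop] fun D => π / ((D : ℝ) - 1) :=
    (IsEquivalent.refl (u := fun _ => π)).div isEquivalent_natCast_add_one_sub_one
  have hpow : x ^ p / (fun D => I / x D) = fun D => π ^ (-(1 : ℝ) / 2) * x D ^ (p + 1) *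
      (Gamma ((2 + p) / 2) / Gamma ((1 + p) / 2)) := funext fun D => by
    have : x D ≠ 0 := by simp only [x]; positivity
    rw [Pi.div_apply, Pi.pow_apply, rpow_add_one this, neg_div, rpow_neg pi_pos.le,
      ← sqrt_eq_rpow]
    simp only [I]
    field_simp
  refine ((hsin.rpow hx0).div hsum).trans ?_
  rw [hpow]
  exact (IsEquivalent.refl.mul (hx'.symm.rpow hx0).symm).mul IsEquivalent.refl

theorem Asymptotics.IsEquivalent.eventually_half_le_and_le_two_mul {α : Type*} {l : Filter α}
    {u v : α → ℝ} (h : u ~[l] v) (hv : ∀ᶠ x in l, 0 < v x) :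
    ∀ᶠ x in l, v x / 2 ≤ u x ∧ u x ≤ 2 * v x := by
  have ht := (isEquivalent_iff_tendsto_one (hv.mono fun _ hx => hx.ne')).1 h
  filter_upwards [ht.eventually (Ioo_mem_nhds (by norm_num : (1 : ℝ) / 2 < 1)
    (by norm_num : (1 : ℝ) < 2)), hv] with x hx hvx
  rw [Pi.div_apply, lt_div_iff₀ hvx, div_lt_iff₀ hvx] at hx
  constructor <;> linarith

/-- Boundary weight asymptotics: for fixed `p > 0`, the normalized weight
`ρ_{D-1} = sin^p(πD/(D+1)) / Σ_{n<D} sin^p(π(n+1)/(D+1))` satisfies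
`ρ_{D-1} ~ π^{-1/2}·(π/(2μ))^{p+1}·Γ((2+p)/2)/Γ((1+p)/2)` as `μ = (D-1)/2 → ∞`;
in particular `ρ_{D-1} = Θ(μ^{-(p+1)})`. -/
theorem stmt_18 (p : ℝ) (hp : 0 < p)
    (ρtop : ℕ → ℝ)
    (hρtop : ∀ D : ℕ, 2 ≤ D → ρtop D =
      Real.sin (π * D / (D + 1)) ^ p /
        ∑ n ∈ Finset.range D, Real.sin (π * (n + 1) / (D + 1)) ^ p) :
    Tendsto (fun D : ℕ => ρtop D /
        (π ^ (-(1:ℝ)/2) * (π / (2 * (((D : ℝ) - 1) / 2))) ^ (p + 1) *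
          (Real.Gamma ((2 + p) / 2) / Real.Gamma ((1 + p) / 2))))
      atTop (nhds 1) ∧
    ∃ c C : ℝ, 0 < c ∧ 0 < C ∧ ∀ᶠ D : ℕ in atTop,
      c * (((D : ℝ) - 1) / 2) ^ (-(p + 1)) ≤ ρtop D ∧
        ρtop D ≤ C * (((D : ℝ) - 1) / 2) ^ (-(p + 1)) := by
  set T : ℕ → ℝ := fun D => π ^ (-(1:ℝ)/2) * (π / (2 * (((D : ℝ) - 1) / 2))) ^ (p + 1) *
    (Gamma ((2 + p) / 2) / Gamma ((1 + p) / 2))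
  set K := π ^ (-(1 : ℝ) / 2) * (π / 2) ^ (p + 1) * (Gamma ((2 + p) / 2) / Gamma ((1 + p) / 2))
  have hK : 0 < K := by
    have := Gamma_pos_of_pos (show 0 < (1 + p) / 2 by linarith)
    have := Gamma_pos_of_pos (show 0 < (2 + p) / 2 by linarith)
    positivity
  have hμ : ∀ᶠ D : ℕ in atTop, 0 < ((D : ℝ) - 1) / 2 := by
    filter_upwards [eventually_ge_atTop 2] with D hD
    linarith [show (2 : ℝ) ≤ D by exact_mod_cast hD]
  have hρ : ρtop ~[atTop] T := by
    refine (isEquivalent_sin_rpow_div_sum_sin_rpow hp).congr_left ?_ |>.congr_right ?_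
    · filter_upwards [eventually_ge_atTop 2] with D hD using (hρtop D hD).symm
    · filter_upwards with D
      simp only [T, mul_div_cancel₀ _ (two_ne_zero' ℝ)]
  have hT : T =ᶠ[atTop] fun D => K * (((D : ℝ) - 1) / 2) ^ (-(p + 1)) := by
    filter_upwards [hμ] with D hD
    simp only [T]
    rw [← div_div, div_rpow (by positivity) hD.le, rpow_neg hD.le]
    ring
  have hpos : ∀ᶠ D : ℕ in atTop, 0 < K * (((D : ℝ) - 1) / 2) ^ (-(p + 1)) :=
    hμ.mono fun D hD => by positivity
  refine ⟨(isEquivalent_iff_tendsto_one ?_).1 hρ, K / 2, 2 * K, by positivity, by positivity, ?_⟩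
  · filter_upwards [hT, hpos] with D hD hD' using hD.trans_ne hD'.ne'
  · filter_upwards [(hρ.congr_right hT).eventually_half_le_and_le_two_mul hpos] with D hD
    constructor <;> linarith [hD.1, hD.2]
end
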